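/- For every integer n ≥ 2 and every subset T of {1,…,n−1} containing no two consecutive integers, we have the polynomial identity Σ_{S : T ⊆ S ⊆ {1,…,n−1}} ψ_{S,n}(t) = t^{|T|} (1+t)^{n−2|T|} in ℤ[t]. -/

import Mathlib

open Polynomial Finset

/-- `[m]_t = 1 + t + ⋯ + t^(m-1)`, with `[0]_t = 0`. -/
noncomputable def qnum (m : ℕ) : Polynomial ℤ := ∑ i ∈ Finset.range m, X ^ i

/-- Given the previous value `prev` and a (sorted) list `s₁, …, s_ℓ`, the product
`[s₁ - prev - 1]_t · [s₂ - s₁ - 1]_t ⋯ [s_ℓ - s_{ℓ-1} - 1]_t`. -/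
noncomputable def gapProd : ℕ → List ℕ → Polynomial ℤ
  | _, [] => 1
  | prev, s :: rest => qnum (s - prev - 1) * gapProd s rest

/-- For a sorted list `s₁, …, s_ℓ`, the product
`[s₁]_t · [s₂ - s₁ - 1]_t ⋯ [s_ℓ - s_{ℓ-1} - 1]_t`. -/
noncomputable def psiProd : List ℕ → Polynomial ℤ
  | [] => 1
  | s :: rest => qnum s * gapProd s rest

/-- `S` contains no two consecutive integers. -/
def NoTwoConsec (S : Finset ℕ) : Prop := ∀ i ∈ S, i + 1 ∉ S

instance (S : Finset ℕ) : Decidable (NoTwoConsec S) :=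
  inferInstanceAs (Decidable (∀ i ∈ S, i + 1 ∉ S))

/-- The polynomial `ψ_{S,n}(t) ∈ ℤ[t]`: it is `0` unless `S` is a subset of
`[1, n-1]` with no two consecutive integers; `ψ_{∅,n} = [n+1]_t`; and for nonempty
`S = {s₁ < … < s_ℓ}` it equals `t^ℓ [s₁]_t [s₂-s₁-1]_t ⋯ [s_ℓ-s_{ℓ-1}-1]_t` if
`n-1 ∈ S`, and the same times `[n - s_ℓ]_t` if `n-1 ∉ S`. -/
noncomputable def psi (n : ℕ) (S : Finset ℕ) : Polynomial ℤ :=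
  if S ⊆ Finset.Icc 1 (n - 1) ∧ NoTwoConsec S then
    if S = ∅ then qnum (n + 1)
    else X ^ S.card * psiProd (S.sort (· ≤ ·)) *
      (if n - 1 ∈ S then 1 else qnum (n - S.sup id))
  else 0

/-!
Write `F(n, T)` for the left-hand side. For `S ⊆ [1, m]` one has
`ψ_{S ∪ {m+1}, m+2} = t ψ_{S,m}` and `ψ_{S,m+2} = (1+t) ψ_{S,m+1} - t ψ_{S,m}`, the latter
coming from `[k+2]_t = (1+t) [k+1]_t - t [k]_t` applied to the last factor. Splitting the sets
`S ⊆ [1, m+1]` according to whether they contain `m+1` therefore gives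
`F(m+2, T) = t F(m, T ∖ {m+1})` if `m+1 ∈ T` and `F(m+2, T) = (1+t) F(m+1, T)` otherwise,
and the identity follows by a two-step induction from `F(0, ∅) = 1` and `F(1, ∅) = 1 + t`.
-/
lemma qnum_zero : qnum 0 = 0 := by simp [qnum]

lemma qnum_one : qnum 1 = 1 := by simp [qnum]

lemma qnum_add_two (m : ℕ) : qnum (m + 2) = (1 + X) * qnum (m + 1) - X * qnum m := by
  simp only [qnum, sum_range_succ]
  ring

namespace Finset

variable {α : Type*} [LinearOrder α]

theorem sort_insert_of_forall_lt {s : Finset α} {a : α} (h : ∀ x ∈ s, x < a) :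
    (insert a s).sort = s.sort ++ [a] := by
  refine (sortedLT_sort _).eq_of_mem_iff ?_ fun x => by simp [or_comm]
  rw [List.sortedLT_iff_pairwise, List.pairwise_append]
  exact ⟨(sortedLT_sort s).pairwise, List.pairwise_singleton _ _,
    fun x hx y hy => (List.mem_singleton.1 hy) ▸ h x ((mem_sort _).1 hx)⟩

theorem getLastD_sort [OrderBot α] (s : Finset α) : s.sort.getLastD ⊥ = s.sup id := by
  induction s using Finset.induction_on_max with
  | empty => simp
  | insert a s ha ih =>
    rw [sort_insert_of_forall_lt ha, List.getLastD_concat, sup_insert, id, left_eq_sup]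
    exact Finset.sup_le fun x hx => (ha x hx).le

end Finset

lemma gapProd_concat (p m : ℕ) (l : List ℕ) :
    gapProd p (l ++ [m]) = gapProd p l * qnum (m - l.getLastD p - 1) := by
  induction l generalizing p with
  | nil => simp [gapProd]
  | cons s rest ih => rw [List.cons_append, gapProd, ih, gapProd, List.getLastD_cons, mul_assoc]

lemma psiProd_sort_insert {S : Finset ℕ} {a : ℕ} (hne : S.Nonempty) (h : ∀ x ∈ S, x < a) :
    psiProd (insert a S).sort = psiProd S.sort * qnum (a - S.sup id - 1) := by
  obtain ⟨s, rest, hS⟩ :=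
    List.exists_cons_of_ne_nil (List.ne_nil_of_length_pos (l := S.sort) (by simpa using hne))
  rw [Finset.sort_insert_of_forall_lt h, ← S.getLastD_sort, bot_eq_zero, hS, List.cons_append,
    psiProd, psiProd, gapProd_concat, List.getLastD_cons, mul_assoc]

lemma NoTwoConsec.mono {S T : Finset ℕ} (hS : NoTwoConsec S) (h : T ⊆ S) : NoTwoConsec T :=
  fun i hi hi' => hS i (h hi) (h hi')

lemma noTwoConsec_insert_add_one_iff {S : Finset ℕ} {m : ℕ} (h : ∀ x ∈ S, x ≤ m) :
    NoTwoConsec (insert (m + 1) S) ↔ NoTwoConsec S ∧ m ∉ S := by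
  constructor
  · intro hS
    exact ⟨hS.mono (subset_insert _ _),
      fun hm => hS m (mem_insert_of_mem hm) (mem_insert_self _ _)⟩
  · rintro ⟨hS, hm⟩ i hi hi'
    rcases mem_insert.1 hi, mem_insert.1 hi' with ⟨h₁ | h₁, h₂ | h₂⟩
    · omega
    · exact absurd (h _ h₂) (by omega)
    · obtain rfl : i = m := by omega
      exact hm h₁
    · exact hS i h₁ h₂

lemma NoTwoConsec.two_mul_card_le {T : Finset ℕ} {m : ℕ} (hT : NoTwoConsec T)
    (h : T ⊆ Icc 1 m) : 2 * #T ≤ m + 1 := by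
  have hdisj : Disjoint T (T.map (addRightEmbedding 1)) := by
    simp only [disjoint_left, mem_map, addRightEmbedding_apply, not_exists, not_and]
    rintro _ ha i hi rfl
    exact hT i hi ha
  calc 2 * #T = #(T ∪ T.map (addRightEmbedding 1)) := by
        rw [card_union_of_disjoint hdisj, card_map, two_mul]
    _ ≤ #(Icc 1 (m + 1)) := by
        refine card_le_card (union_subset (h.trans (Icc_subset_Icc_right (by omega))) ?_)
        simp only [subset_iff, mem_map, addRightEmbedding_apply, mem_Icc]
        rintro _ ⟨i, hi, rfl⟩
        have := mem_Icc.1 (h hi)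
        omega
    _ = m + 1 := by simp

section psi

variable {n m : ℕ} {S : Finset ℕ}

lemma psi_of_not_subset (h : ¬ S ⊆ Icc 1 (n - 1)) : psi n S = 0 := by
  simp [psi, h]

lemma psi_of_not_noTwoConsec (h : ¬ NoTwoConsec S) : psi n S = 0 := by
  simp [psi, h]

lemma psi_empty (n : ℕ) : psi n ∅ = qnum (n + 1) := by
  simp [psi, NoTwoConsec]

/-- The last factor `[n - s_ℓ]_t` is `[1]_t = 1` when `n - 1 ∈ S`, and `[0]_t = 0` when
`S ⊄ [1, n - 1]`, so one formula covers all nonempty stable `S`. -/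
lemma psi_of_nonempty (hS : NoTwoConsec S) (h0 : 0 ∉ S) (hne : S.Nonempty) :
    psi n S = X ^ #S * psiProd S.sort * qnum (n - S.sup id) := by
  by_cases hsub : S ⊆ Icc 1 (n - 1)
  · rw [psi, if_pos ⟨hsub, hS⟩, if_neg hne.ne_empty]
    split_ifs with htop
    · have : S.sup id = n - 1 := le_antisymm (Finset.sup_le fun x hx => (mem_Icc.1 (hsub hx)).2)
        (le_sup (f := id) htop)
      rw [this, show n - (n - 1) = 1 by grind, qnum_one]
    · rfl
  · obtain ⟨x, hx, hxn⟩ := not_subset.1 hsub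
    have : n ≤ S.sup id := le_trans (by grind) (le_sup (f := id) hx)
    rw [psi_of_not_subset hsub, Nat.sub_eq_zero_of_le this, qnum_zero, mul_zero]

lemma psi_add_two_insert (hS : S ⊆ Icc 1 m) :
    psi (m + 2) (insert (m + 1) S) = X * psi m S := by
  have hle : ∀ x ∈ S, x ≤ m := fun x hx => (mem_Icc.1 (hS hx)).2
  by_cases hst : NoTwoConsec S ∧ m ∉ S
  swap
  · rw [psi_of_not_noTwoConsec ((noTwoConsec_insert_add_one_iff hle).not.2 hst)]
    rcases not_and_or.1 hst with hst | hm
    · rw [psi_of_not_noTwoConsec hst, mul_zero]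
    · rw [psi_of_not_subset fun h => by have := mem_Icc.1 (h (not_not.1 hm)); omega, mul_zero]
  have h0 : 0 ∉ insert (m + 1) S := by simpa using fun h : 0 ∈ S => (mem_Icc.1 (hS h)).1
  rw [psi_of_nonempty ((noTwoConsec_insert_add_one_iff hle).2 hst) h0 (insert_nonempty _ _)]
  rcases S.eq_empty_or_nonempty with rfl | hne
  · simp [psi_empty, psiProd, gapProd, qnum_one]
  · have hsup : S.sup id ≤ m := Finset.sup_le hle
    rw [psi_of_nonempty hst.1 (fun h => h0 (mem_insert_of_mem h)) hne,
      psiProd_sort_insert hne fun x hx => Nat.lt_add_one_of_le (hle x hx),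
      card_insert_of_notMem fun h => by simpa using hle _ h, sup_insert, id,
      max_eq_left (by omega), show m + 2 - (m + 1) = 1 by omega,
      show m + 1 - S.sup id - 1 = m - S.sup id by omega, qnum_one]
    ring

lemma psi_add_two (hS : S ⊆ Icc 1 m) :
    psi (m + 2) S = (1 + X) * psi (m + 1) S - X * psi m S := by
  by_cases hst : NoTwoConsec S
  swap
  · simp only [psi_of_not_noTwoConsec hst, mul_zero, sub_zero]
  rcases S.eq_empty_or_nonempty with rfl | hne
  · simp only [psi_empty, qnum_add_two]
  have h0 : 0 ∉ S := fun h => by simpa using (mem_Icc.1 (hS h)).1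
  obtain ⟨j, rfl⟩ : ∃ j, m = S.sup id + j :=
    Nat.exists_eq_add_of_le (Finset.sup_le fun x hx => (mem_Icc.1 (hS hx)).2)
  simp only [psi_of_nonempty hst h0 hne]
  rw [show S.sup id + j + 2 - S.sup id = j + 2 by omega,
    show S.sup id + j + 1 - S.sup id = j + 1 by omega, Nat.add_sub_cancel_left, qnum_add_two]
  ring

end psi

noncomputable def psiSum (n : ℕ) (T : Finset ℕ) : Polynomial ℤ :=
  ∑ S ∈ (Finset.Icc 1 (n - 1)).powerset.filter (fun S => T ⊆ S), psi n S

section psiSum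

variable {n m : ℕ} {T : Finset ℕ}

lemma sum_psi_eq_psiSum {N : ℕ} (h : n - 1 ≤ N) :
    ∑ S ∈ (Icc 1 N).powerset.filter (fun S => T ⊆ S), psi n S = psiSum n T := by
  refine (sum_subset (filter_subset_filter _ (powerset_mono.2 (Icc_subset_Icc_right h)))
    fun S hS hS' => psi_of_not_subset fun hsub => hS' ?_).symm
  exact mem_filter.2 ⟨mem_powerset.2 hsub, (mem_filter.1 hS).2⟩

lemma psiSum_add_two (m : ℕ) (T : Finset ℕ) :
    psiSum (m + 2) T = ∑ S ∈ (Icc 1 m).powerset.filter (fun S => T ⊆ S), psi (m + 2) S +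
      X * psiSum m (T.erase (m + 1)) := by
  have hm : m + 1 ∉ Icc 1 m := by simp
  rw [psiSum, show m + 2 - 1 = m + 1 from rfl, ← insert_Icc_right_eq_Icc_add_one (by omega),
    sum_filter, sum_powerset_insert hm, ← sum_filter]
  congr 1
  rw [← sum_psi_eq_psiSum (N := m) (by omega), sum_filter, mul_sum]
  refine sum_congr rfl fun S hS => ?_
  simp only [subset_insert_iff, psi_add_two_insert (mem_powerset.1 hS), mul_ite, mul_zero]

lemma psiSum_add_two_of_mem (h : m + 1 ∈ T) :
    psiSum (m + 2) T = X * psiSum m (T.erase (m + 1)) := by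
  rw [psiSum_add_two, filter_false_of_mem, sum_empty, zero_add]
  intro S hS hTS
  have := mem_Icc.1 (mem_powerset.1 hS (hTS h))
  omega

lemma psiSum_add_two_of_notMem (h : m + 1 ∉ T) :
    psiSum (m + 2) T = (1 + X) * psiSum (m + 1) T := by
  rw [psiSum_add_two, erase_eq_of_notMem h,
    sum_congr rfl fun S hS => psi_add_two (mem_powerset.1 (mem_filter.1 hS).1), sum_sub_distrib,
    ← mul_sum, ← mul_sum, sum_psi_eq_psiSum (n := m + 1) (by omega),
    sum_psi_eq_psiSum (n := m) (by omega)]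
  ring

end psiSum

theorem psi_interval_sum_general (n : ℕ) (T : Finset ℕ)
    (hT1 : T ⊆ Finset.Icc 1 (n - 1)) (hT2 : NoTwoConsec T) :
    ∑ S ∈ (Finset.Icc 1 (n - 1)).powerset.filter (fun S => T ⊆ S), psi n S =
      X ^ T.card * (1 + X) ^ (n - 2 * T.card) := by
  change psiSum n T = _
  induction n using Nat.twoStepInduction generalizing T with
  | zero =>
    obtain rfl : T = ∅ := by simpa using hT1
    simp [psiSum, psi_empty, qnum_one]
  | one =>
    obtain rfl : T = ∅ := by simpa using hT1
    simp [psiSum, psi_empty, qnum, sum_range_succ]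
  | more m ih₀ ih₁ =>
    by_cases hm : m + 1 ∈ T
    · have hT' : T.erase (m + 1) ⊆ Icc 1 (m - 1) := fun x hx => by
        obtain ⟨hx, hxT⟩ := mem_erase.1 hx
        have hxm : x ≠ m := fun h => hT2 x hxT (h ▸ hm)
        have := mem_Icc.1 (hT1 hxT)
        exact mem_Icc.2 (by omega)
      obtain ⟨k, hk⟩ := Nat.exists_eq_add_one_of_ne_zero (card_ne_zero_of_mem hm)
      rw [psiSum_add_two_of_mem hm, ih₀ _ hT' (hT2.mono (erase_subset _ _)),
        card_erase_of_mem hm, hk, Nat.add_sub_cancel,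
        show m + 2 - 2 * (k + 1) = m - 2 * k by omega]
      ring
    · have hT' : T ⊆ Icc 1 m := fun x hx => by
        have := ne_of_mem_of_not_mem hx hm
        have := mem_Icc.1 (hT1 hx)
        exact mem_Icc.2 (by omega)
      have := hT2.two_mul_card_le hT'
      rw [psiSum_add_two_of_notMem hm, ih₁ T hT' hT2,
        show m + 2 - 2 * #T = m + 1 - 2 * #T + 1 by omega]
      ring

/-- Lemma (augmented Chow identity): for `n ≥ 2` and `T ∈ Stab([1, n-1])`,
`∑_{T ⊆ S ⊆ [1, n-1]} ψ_{S,n}(t) = t^{|T|} (1+t)^{n-2|T|}`. -/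
theorem psi_interval_sum (n : ℕ) (hn : 2 ≤ n) (T : Finset ℕ)
    (hT1 : T ⊆ Finset.Icc 1 (n - 1)) (hT2 : NoTwoConsec T) :
    ∑ S ∈ (Finset.Icc 1 (n - 1)).powerset.filter (fun S => T ⊆ S), psi n S =
      X ^ T.card * (1 + X) ^ (n - 2 * T.card) :=
  psi_interval_sum_general n T hT1 hT2
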